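/- Let P = ⟨D,Γ,Δ⟩ be a planning problem in the action language B with consistent action theory (D,Γ), and suppose (D,Γ) is deterministic, i.e., |Φ(a,s)| ≤ 1 for every action a and state s. Then the action sequence a0,a1,...,a_{n−1} is a plan achieving Δ (i.e., Φ̂(⟨a0,...,a_{n−1}⟩,s0) ≠ ∅ and Δ ⊆ s for the state s in Φ̂(⟨a0,...,a_{n−1}⟩,s0), where s0 is the initial state) if and only if there exists an answer set M of Π(P,n) with occ(a_i,i) ∈ M for every i ∈ {0,...,n−1}. -/

import Mathlib

/- # Action language B -/

/-- A fluent literal: a fluent or its negation. -/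
inductive Lit (F : Type) where
  | pos : F → Lit F
  | neg : F → Lit F

namespace Lit
/-- The complement of a fluent literal. -/
def compl {F : Type} : Lit F → Lit F
  | .pos f => .neg f
  | .neg f => .pos f
end Lit

/-- A set of fluent literals is consistent if it contains no fluent together with
its negation. -/
def ConsistentLits {F : Type} (s : Set (Lit F)) : Prop :=
  ∀ f : F, ¬ (Lit.pos f ∈ s ∧ Lit.neg f ∈ s)

/-- A set of fluent literals is complete if it contains each fluent or its negation. -/
def CompleteLits {F : Type} (s : Set (Lit F)) : Prop :=
  ∀ f : F, Lit.pos f ∈ s ∨ Lit.neg f ∈ s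

/-- A static causal law `caused(prem, concl)`. -/
structure StaticLaw (F : Type) where
  prem : Set (Lit F)
  concl : Lit F

/-- A dynamic causal law `causes(act, concl, prem)`. -/
structure DynamicLaw (F A : Type) where
  act : A
  concl : Lit F
  prem : Set (Lit F)

/-- An executability condition `executable(act, prem)`. -/
structure ExecLaw (F A : Type) where
  act : A
  prem : Set (Lit F)

/-- A domain in the action language B. -/
structure BDomain (F A : Type) where
  statics : Set (StaticLaw F)
  dynamics : Set (DynamicLaw F A)
  execs : Set (ExecLaw F A)

/-- `v` is closed under the set `K` of static causal laws. -/
def ClosedUnder {F : Type} (K : Set (StaticLaw F)) (v : Set (Lit F)) : Prop :=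
  ∀ r ∈ K, r.prem ⊆ v → r.concl ∈ v

/-- `IsCl K u v`: `v` is the least consistent set of literals containing `u`
and closed under `K`. -/
def IsCl {F : Type} (K : Set (StaticLaw F)) (u v : Set (Lit F)) : Prop :=
  u ⊆ v ∧ ConsistentLits v ∧ ClosedUnder K v ∧
    ∀ w, u ⊆ w → ConsistentLits w → ClosedUnder K w → v ⊆ w

/-- A state: a maximal (complete) consistent set of fluent literals closed under
the static causal laws. -/
def IsState {F A : Type} (D : BDomain F A) (s : Set (Lit F)) : Prop :=
  CompleteLits s ∧ ConsistentLits s ∧ ClosedUnder D.statics s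

/-- Action `a` is executable in `s`. -/
def Executable {F A : Type} (D : BDomain F A) (a : A) (s : Set (Lit F)) : Prop :=
  ∃ e ∈ D.execs, e.act = a ∧ e.prem ⊆ s

/-- The direct effects `e(a,s)` of action `a` in `s`. -/
def directEffects {F A : Type} (D : BDomain F A) (a : A) (s : Set (Lit F)) : Set (Lit F) :=
  { l | ∃ d ∈ D.dynamics, d.act = a ∧ d.concl = l ∧ d.prem ⊆ s }

/-- The transition function `Φ` of a domain. -/
def Phi {F A : Type} (D : BDomain F A) (a : A) (s : Set (Lit F)) : Set (Set (Lit F)) :=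
  { s' | Executable D a s ∧ IsState D s' ∧
      IsCl D.statics (directEffects D a s ∪ (s ∩ s')) s' }

/-- A planning problem `⟨D, Γ, Δ⟩`; `init` is the set of literals `f` with
`initially(f) ∈ Γ`, and `goal` is `Δ`. -/
structure PlanningProblem (F A : Type) where
  dom : BDomain F A
  init : Set (Lit F)
  goal : Set (Lit F)

/-- The action theory `(D,Γ)` is consistent: `Φ(a,s) ≠ ∅` whenever `a` is executable
in state `s`, and the initial state is a state. -/
def ConsistentTheory {F A : Type} (P : PlanningProblem F A) : Prop :=
  (∀ (a : A) (s : Set (Lit F)), IsState P.dom s → Executable P.dom a s →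
      (Phi P.dom a s).Nonempty) ∧
  IsState P.dom P.init

/-- `s0 a0 s1 ... a_{n-1} s_n` is a trajectory. -/
def IsTrajectory {F A : Type} (D : BDomain F A) (n : ℕ)
    (ss : ℕ → Set (Lit F)) (acts : ℕ → A) : Prop :=
  IsState D (ss 0) ∧ ∀ i < n, ss (i + 1) ∈ Phi D (acts i) (ss i)

/- # Answer set programming -/

/-- A normal rule (`head = none` gives a constraint). -/
structure NRule (At : Type) where
  head : Option At
  pos : Set At
  neg : Set At

/-- A cardinality-1 choice rule `1{choices}1 ← pos, not neg`. -/
structure CRule (At : Type) where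
  choices : Set At
  pos : Set At
  neg : Set At

/-- A program: normal rules (and constraints) plus choice rules. -/
structure Program (At : Type) where
  normals : Set (NRule At)
  choiceRules : Set (CRule At)

/-- `X` is closed under the Gelfond–Lifschitz reduct of `P` w.r.t. `M`. The reduct
contains `h ← pos` for every normal rule with head `h` whose negative body is
disjoint from `M`, and `a ← pos` for every choice rule with negative body disjoint
from `M` and every chosen atom `a ∈ M`. -/
def ReductClosed {At : Type} (P : Program At) (M X : Set At) : Prop :=
  (∀ r ∈ P.normals, r.neg ∩ M = ∅ → r.pos ⊆ X → ∀ h, r.head = some h → h ∈ X) ∧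
  (∀ c ∈ P.choiceRules, c.neg ∩ M = ∅ → c.pos ⊆ X → ∀ a ∈ c.choices, a ∈ M → a ∈ X)

/-- `M` satisfies all constraints of `P`. -/
def SatConstraints {At : Type} (P : Program At) (M : Set At) : Prop :=
  ∀ r ∈ P.normals, r.head = none → ¬ (r.pos ⊆ M ∧ r.neg ∩ M = ∅)

/-- `M` satisfies the choice rules of `P`: when the body holds, exactly one chosen
atom is in `M`. -/
def SatChoices {At : Type} (P : Program At) (M : Set At) : Prop :=
  ∀ c ∈ P.choiceRules, c.pos ⊆ M → c.neg ∩ M = ∅ → ∃! a, a ∈ c.choices ∧ a ∈ M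

/-- `M` is an answer set (stable model) of `P`: it satisfies constraints and choice
rules and is the least model of the reduct of `P` w.r.t. `M`. -/
def AnswerSet {At : Type} (P : Program At) (M : Set At) : Prop :=
  SatConstraints P M ∧ SatChoices P M ∧ ReductClosed P M M ∧
    ∀ X, ReductClosed P M X → M ⊆ X

/- # The encoding Π(P,n) -/

/-- Atoms of the program `Π(P,n)`. -/
inductive PAtom (F A : Type) where
  | holds : Lit F → ℕ → PAtom F A
  | occ : A → ℕ → PAtom F A
  | possible : A → ℕ → PAtom F A
  | goal : PAtom F A

/-- `holds(φ,t)`: the set of atoms `holds(l,t)` for `l ∈ φ`. -/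
def holdsSet {F A : Type} (φ : Set (Lit F)) (t : ℕ) : Set (PAtom F A) :=
  { x | ∃ l ∈ φ, x = PAtom.holds l t }

/-- The standard ASP encoding `Π(P,n)` of a planning problem with horizon `n`. -/
def PiProgram {F A : Type} (P : PlanningProblem F A) (n : ℕ) : Program (PAtom F A) where
  normals :=
    -- facts holds(f,0) for initially(f) ∈ Γ
    { r | ∃ l ∈ P.init, r = ⟨some (PAtom.holds l 0), ∅, ∅⟩ } ∪
    -- possible(a,T) ← holds(φ,T)
    { r | ∃ e ∈ P.dom.execs, ∃ t ≤ n,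
        r = ⟨some (PAtom.possible e.act t), holdsSet e.prem t, ∅⟩ } ∪
    -- holds(f,T+1) ← occ(a,T), holds(φ,T)
    { r | ∃ d ∈ P.dom.dynamics, ∃ t < n,
        r = ⟨some (PAtom.holds d.concl (t + 1)),
             insert (PAtom.occ d.act t) (holdsSet d.prem t), ∅⟩ } ∪
    -- holds(f,T) ← holds(φ,T)
    { r | ∃ sl ∈ P.dom.statics, ∃ t ≤ n,
        r = ⟨some (PAtom.holds sl.concl t), holdsSet sl.prem t, ∅⟩ } ∪
    -- ← occ(A,T), not possible(A,T)
    { r | ∃ (a : A), ∃ t < n,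
        r = ⟨none, {PAtom.occ a t}, {PAtom.possible a t}⟩ } ∪
    -- inertia
    { r | ∃ (l : Lit F), ∃ t < n,
        r = ⟨some (PAtom.holds l (t + 1)), {PAtom.holds l t},
             {PAtom.holds l.compl (t + 1)}⟩ } ∪
    -- ← holds(F,T), holds(¬F,T)
    { r | ∃ (f : F), ∃ t ≤ n,
        r = ⟨none, {PAtom.holds (Lit.pos f) t, PAtom.holds (Lit.neg f) t}, ∅⟩ } ∪
    -- goal ← holds(Δ,n)  and  ← not goal
    { ⟨some PAtom.goal, holdsSet P.goal n, ∅⟩,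
      ⟨none, ∅, {PAtom.goal}⟩ }
  choiceRules :=
    -- 1{occ(A,T) : action(A)}1 for T < n
    { c | ∃ t < n, c = ⟨{ x | ∃ a : A, x = PAtom.occ a t }, ∅, ∅⟩ }

/-- The extension `Φ̂` of `Φ` to action sequences: `Φ̂(⟨⟩,s) = {s}` and
`Φ̂(a::α, s) = ⋃_{s' ∈ Φ(a,s)} Φ̂(α,s')` when `Φ(a,s) ≠ ∅` and all recursive values
are nonempty, and `∅` otherwise. -/
def PhiHat {F A : Type} (D : BDomain F A) : List A → Set (Lit F) → Set (Set (Lit F))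
  | [], s => {s}
  | a :: rest, s =>
      { s'' | ((Phi D a s).Nonempty ∧
                ∀ s' ∈ Phi D a s, (PhiHat D rest s').Nonempty) ∧
              ∃ s' ∈ Phi D a s, s'' ∈ PhiHat D rest s' }

/-- The action theory is deterministic: `|Φ(a,s)| ≤ 1` for every action `a`
and state `s`. -/
def Deterministic {F A : Type} (D : BDomain F A) : Prop :=
  ∀ (a : A) (s : Set (Lit F)), IsState D s → (Phi D a s).Subsingleton
/-!
An answer set `M` of `Π(P,n)` is read as the sequence `s_t = {l | holds(l,t) ∈ M}`, and a
trajectory `s_0 a_0 … s_n` as the set of atoms true along it. The reduct rules with head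
`holds(·,t+1)` are exactly the dynamic, inertial and static laws generating
`Cl(e(a_t,s_t) ∪ (s_t ∩ s_{t+1}))`, so minimality of an answer set corresponds to the
minimality of the closure defining `Φ`: answer sets containing every `occ(a_i,i)` yield
trajectories from `s_0` ending in a goal state, and such trajectories yield answer sets.
Determinism makes `Φ̂(⟨a_0,…,a_{n-1}⟩, s_0)` the singleton of the endpoint of the
trajectory, which turns "some outcome reaches `Δ`" into "every outcome does".
-/

namespace Lit

@[simp] theorem compl_compl {F : Type} (l : Lit F) : l.compl.compl = l := by
  cases l <;> rfl

end Lit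

section Literals

variable {F : Type} {s : Set (Lit F)}

theorem ConsistentLits.compl_notMem (hs : ConsistentLits s) {l : Lit F} (hl : l ∈ s) :
    l.compl ∉ s := by
  cases l with
  | pos f => exact fun h => hs f ⟨hl, h⟩
  | neg f => exact fun h => hs f ⟨h, hl⟩

theorem completeLits_iff : CompleteLits s ↔ ∀ l : Lit F, l ∈ s ∨ l.compl ∈ s := by
  refine ⟨fun hs l => ?_, fun hs f => hs (.pos f)⟩
  cases l with
  | pos f => exact hs f
  | neg f => exact (hs f).symm

theorem IsCl.induction {K : Set (StaticLaw F)} {u : Set (Lit F)} (h : IsCl K u s)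
    {p : Lit F → Prop} (hu : ∀ l ∈ u, p l)
    (hK : ∀ r ∈ K, r.prem ⊆ {l ∈ s | p l} → p r.concl) : ∀ l ∈ s, p l := by
  obtain ⟨hus, hcons, hclosed, hmin⟩ := h
  have hsub : s ⊆ {l ∈ s | p l} :=
    hmin _ (fun l hl => ⟨hus hl, hu l hl⟩) (fun f hf => hcons f ⟨hf.1.1, hf.2.1⟩)
      fun r hr hprem => ⟨hclosed r hr fun l hl => (hprem hl).1, hK r hr hprem⟩
  exact fun l hl => (hsub hl).2

end Literals

section Trajectories

variable {F A : Type} {D : BDomain F A}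

theorem List.ofFn_val_succ (f : ℕ → A) (n : ℕ) :
    List.ofFn (fun i : Fin (n + 1) => f i) = f 0 :: List.ofFn (fun i : Fin n => f (i + 1)) := by
  simp [List.ofFn_succ]

theorem IsTrajectory.isState {n : ℕ} {ss : ℕ → Set (Lit F)} {acts : ℕ → A}
    (h : IsTrajectory D n ss acts) : ∀ t ≤ n, IsState D (ss t)
  | 0, _ => h.1
  | t + 1, ht => (h.2 t ht).2.1

theorem IsTrajectory.tail {n : ℕ} {ss : ℕ → Set (Lit F)} {acts : ℕ → A}
    (h : IsTrajectory D (n + 1) ss acts) :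
    IsTrajectory D n (fun t => ss (t + 1)) (fun t => acts (t + 1)) :=
  ⟨(h.2 0 n.succ_pos).2.1, fun i hi => h.2 (i + 1) (Nat.succ_lt_succ hi)⟩

theorem exists_isTrajectory_of_mem_phiHat :
    ∀ {n : ℕ} {acts : ℕ → A} {s s' : Set (Lit F)}, IsState D s →
      s' ∈ PhiHat D (List.ofFn fun i : Fin n => acts i) s →
      ∃ ss, IsTrajectory D n ss acts ∧ ss 0 = s ∧ ss n = s'
  | 0, _, s, _, hs, h =>
    ⟨fun _ => s, ⟨hs, fun _ hi => absurd hi (Nat.not_lt_zero _)⟩, rfl, h.symm⟩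
  | n + 1, acts, s, s', hs, h => by
    rw [List.ofFn_val_succ] at h
    obtain ⟨-, s₁, hs₁, hrest⟩ := h
    obtain ⟨ss, ⟨-, hstep⟩, h0, hn⟩ :=
      exists_isTrajectory_of_mem_phiHat (acts := fun j => acts (j + 1)) hs₁.2.1 hrest
    refine ⟨fun t => Nat.casesOn t s ss, ⟨hs, ?_⟩, rfl, hn⟩
    rintro (_ | i) hi
    · simpa [h0] using hs₁
    · exact hstep i (Nat.lt_of_succ_lt_succ hi)

theorem phiHat_eq_singleton (hdet : Deterministic D) :
    ∀ {n : ℕ} {ss : ℕ → Set (Lit F)} {acts : ℕ → A}, IsTrajectory D n ss acts →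
      PhiHat D (List.ofFn fun i : Fin n => acts i) (ss 0) = {ss n}
  | 0, _, _, _ => rfl
  | n + 1, ss, acts, h => by
    have hΦ : Phi D (acts 0) (ss 0) = {ss 1} :=
      (hdet _ _ h.1).eq_singleton_of_mem (h.2 0 n.succ_pos)
    have ih := phiHat_eq_singleton hdet h.tail
    ext s
    simp [PhiHat, hΦ, ih]

end Trajectories

section AnswerSets

variable {At : Type} {Pr : Program At} {M : Set At}

theorem AnswerSet.induction (hM : AnswerSet Pr M) {p : At → Prop}
    (hnormal : ∀ r ∈ Pr.normals, r.neg ∩ M = ∅ → r.pos ⊆ {x ∈ M | p x} →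
      ∀ h, r.head = some h → h ∈ M → p h)
    (hchoice : ∀ c ∈ Pr.choiceRules, c.neg ∩ M = ∅ → c.pos ⊆ {x ∈ M | p x} →
      ∀ a ∈ c.choices, a ∈ M → p a) :
    ∀ x ∈ M, p x := by
  have hclosed : ReductClosed Pr M {x ∈ M | p x} := by
    refine ⟨fun r hr hneg hpos h hh => ?_,
      fun c hc hneg hpos a ha haM => ⟨haM, hchoice c hc hneg hpos a ha haM⟩⟩
    have hhM := hM.2.2.1.1 r hr hneg (fun x hx => (hpos hx).1) h hh
    exact ⟨hhM, hnormal r hr hneg hpos h hh hhM⟩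
  exact fun x hx => (hM.2.2.2 _ hclosed hx).2

end AnswerSets

namespace PiProgram

variable {F A : Type} {P : PlanningProblem F A} {n : ℕ}

theorem fact_mem {l : Lit F} (hl : l ∈ P.init) :
    (⟨some (.holds l 0), ∅, ∅⟩ : NRule (PAtom F A)) ∈ (PiProgram P n).normals :=
  .inl <| .inl <| .inl <| .inl <| .inl <| .inl <| .inl ⟨l, hl, rfl⟩

theorem exec_mem {e : ExecLaw F A} (he : e ∈ P.dom.execs) {t : ℕ} (ht : t ≤ n) :
    (⟨some (.possible e.act t), holdsSet e.prem t, ∅⟩ : NRule (PAtom F A)) ∈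
      (PiProgram P n).normals :=
  .inl <| .inl <| .inl <| .inl <| .inl <| .inl <| .inr ⟨e, he, t, ht, rfl⟩

theorem dynamic_mem {d : DynamicLaw F A} (hd : d ∈ P.dom.dynamics) {t : ℕ} (ht : t < n) :
    (⟨some (.holds d.concl (t + 1)), insert (.occ d.act t) (holdsSet d.prem t), ∅⟩ :
      NRule (PAtom F A)) ∈ (PiProgram P n).normals :=
  .inl <| .inl <| .inl <| .inl <| .inl <| .inr ⟨d, hd, t, ht, rfl⟩

theorem static_mem {r : StaticLaw F} (hr : r ∈ P.dom.statics) {t : ℕ} (ht : t ≤ n) :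
    (⟨some (.holds r.concl t), holdsSet r.prem t, ∅⟩ : NRule (PAtom F A)) ∈
      (PiProgram P n).normals :=
  .inl <| .inl <| .inl <| .inl <| .inr ⟨r, hr, t, ht, rfl⟩

theorem occ_constraint_mem (a : A) {t : ℕ} (ht : t < n) :
    (⟨none, {.occ a t}, {.possible a t}⟩ : NRule (PAtom F A)) ∈ (PiProgram P n).normals :=
  .inl <| .inl <| .inl <| .inr ⟨a, t, ht, rfl⟩

theorem inertia_mem (l : Lit F) {t : ℕ} (ht : t < n) :
    (⟨some (.holds l (t + 1)), {.holds l t}, {.holds l.compl (t + 1)}⟩ : NRule (PAtom F A)) ∈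
      (PiProgram P n).normals :=
  .inl <| .inl <| .inr ⟨l, t, ht, rfl⟩

theorem consistency_constraint_mem (f : F) {t : ℕ} (ht : t ≤ n) :
    (⟨none, {.holds (.pos f) t, .holds (.neg f) t}, ∅⟩ : NRule (PAtom F A)) ∈
      (PiProgram P n).normals :=
  .inl <| .inr ⟨f, t, ht, rfl⟩

theorem goal_mem :
    (⟨some .goal, holdsSet P.goal n, ∅⟩ : NRule (PAtom F A)) ∈ (PiProgram P n).normals :=
  .inr <| .inl rfl

theorem goal_constraint_mem :
    (⟨none, ∅, {.goal}⟩ : NRule (PAtom F A)) ∈ (PiProgram P n).normals :=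
  .inr <| .inr rfl

theorem choice_mem {t : ℕ} (ht : t < n) :
    (⟨{x | ∃ a : A, x = .occ a t}, ∅, ∅⟩ : CRule (PAtom F A)) ∈
      (PiProgram P n).choiceRules :=
  ⟨t, ht, rfl⟩

end PiProgram

section Forward

variable {F A : Type} {P : PlanningProblem F A} {n : ℕ} {acts : ℕ → A}
  {ss : ℕ → Set (Lit F)}

def trajectoryModel (P : PlanningProblem F A) (n : ℕ) (acts : ℕ → A)
    (ss : ℕ → Set (Lit F)) : Set (PAtom F A) := fun x =>
  match x with
  | .holds l t => t ≤ n ∧ l ∈ ss t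
  | .occ a t => t < n ∧ a = acts t
  | .possible a t => t ≤ n ∧ Executable P.dom a (ss t)
  | .goal => True

theorem satConstraints_trajectoryModel (h : IsTrajectory P.dom n ss acts) :
    SatConstraints (PiProgram P n) (trajectoryModel P n acts ss) := by
  rintro r hr hhead ⟨hpos, hneg⟩
  rcases hr with (((((((⟨l, hl, rfl⟩ | ⟨e, he, t, ht, rfl⟩) | ⟨d, hd, t, ht, rfl⟩) |
    ⟨sl, hsl, t, ht, rfl⟩) | ⟨a, t, ht, rfl⟩) | ⟨l, t, ht, rfl⟩) |
    ⟨f, t, ht, rfl⟩) | (rfl | rfl)) <;> cases hhead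
  · obtain ⟨-, rfl⟩ := hpos rfl
    exact hneg.subset ⟨rfl, ht.le, (h.2 t ht).1⟩
  · exact (h.isState t ht).2.1 f ⟨(hpos (.inl rfl)).2, (hpos (.inr rfl)).2⟩
  · exact hneg.subset ⟨rfl, trivial⟩

theorem satChoices_trajectoryModel :
    SatChoices (PiProgram P n) (trajectoryModel P n acts ss) := by
  rintro c ⟨t, ht, rfl⟩ - -
  refine ⟨.occ (acts t) t, ⟨⟨acts t, rfl⟩, ht, rfl⟩, ?_⟩
  rintro x ⟨⟨a, rfl⟩, -, rfl⟩
  rfl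

theorem reductClosed_trajectoryModel (h : IsTrajectory P.dom n ss acts)
    (hinit : P.init ⊆ ss 0) :
    ReductClosed (PiProgram P n) (trajectoryModel P n acts ss) (trajectoryModel P n acts ss) := by
  refine ⟨fun r hr hneg hpos x hx => ?_, fun _ _ _ _ _ _ hx => hx⟩
  rcases hr with (((((((⟨l, hl, rfl⟩ | ⟨e, he, t, ht, rfl⟩) | ⟨d, hd, t, ht, rfl⟩) |
    ⟨sl, hsl, t, ht, rfl⟩) | ⟨a, t, ht, rfl⟩) | ⟨l, t, ht, rfl⟩) |
    ⟨f, t, ht, rfl⟩) | (rfl | rfl)) <;> cases hx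
  · exact ⟨n.zero_le, hinit hl⟩
  · exact ⟨ht, e, he, rfl, fun l hl => (hpos ⟨l, hl, rfl⟩).2⟩
  · obtain ⟨-, hact⟩ := hpos (Set.mem_insert _ _)
    have hprem : d.prem ⊆ ss t := fun l hl =>
      (hpos (Set.mem_insert_of_mem _ ⟨l, hl, rfl⟩)).2
    exact ⟨ht, (h.2 t ht).2.2.1 (.inl ⟨d, hd, hact, rfl, hprem⟩)⟩
  · exact ⟨ht, (h.isState t ht).2.2 sl hsl fun l hl => (hpos ⟨l, hl, rfl⟩).2⟩
  · have hcompl : l.compl ∉ ss (t + 1) := fun hl => hneg.subset ⟨rfl, ht, hl⟩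
    refine ⟨ht, ?_⟩
    simpa [hcompl] using completeLits_iff.1 (h.isState (t + 1) ht).1 l
  · trivial

theorem trajectoryModel_subset_of_reductClosed (h : IsTrajectory P.dom n ss acts)
    (hinit : ss 0 ⊆ P.init) (hgoal : P.goal ⊆ ss n) {X : Set (PAtom F A)}
    (hX : ReductClosed (PiProgram P n) (trajectoryModel P n acts ss) X) :
    trajectoryModel P n acts ss ⊆ X := by
  obtain ⟨hXn, hXc⟩ := hX
  have hocc : ∀ t < n, .occ (acts t) t ∈ X := fun t ht =>
    hXc _ (PiProgram.choice_mem ht) (Set.empty_inter _) (Set.empty_subset _) _ ⟨acts t, rfl⟩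
      ⟨ht, rfl⟩
  have hholds : ∀ t ≤ n, ∀ l ∈ ss t, .holds l t ∈ X := by
    intro t
    induction t with
    | zero =>
      exact fun _ l hl => hXn _ (PiProgram.fact_mem (hinit hl)) (Set.empty_inter _)
        (Set.empty_subset _) _ rfl
    | succ t ih =>
      intro (ht : t < n)
      have hconsistent := (h.isState (t + 1) ht).2.1
      refine (h.2 t ht).2.2.induction ?_ fun r hr hprem => ?_
      · rintro l (⟨d, hd, hact, rfl, hprem⟩ | ⟨hl, hl'⟩)
        · refine hXn _ (PiProgram.dynamic_mem hd ht) (Set.empty_inter _) ?_ _ rfl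
          rintro x (rfl | ⟨l, hl, rfl⟩)
          · exact hact ▸ hocc t ht
          · exact ih ht.le l (hprem hl)
        · refine hXn _ (PiProgram.inertia_mem l ht) ?_ ?_ _ rfl
          · exact Set.singleton_inter_eq_empty.2 fun hm => hconsistent.compl_notMem hl' hm.2
          · rintro x rfl
            exact ih ht.le l hl
      · refine hXn _ (PiProgram.static_mem hr ht) (Set.empty_inter _) ?_ _ rfl
        rintro x ⟨l, hl, rfl⟩
        exact (hprem hl).2
  have hposs : ∀ t ≤ n, ∀ a, Executable P.dom a (ss t) → .possible a t ∈ X := by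
    rintro t ht a ⟨e, he, rfl, hprem⟩
    refine hXn _ (PiProgram.exec_mem he ht) (Set.empty_inter _) ?_ _ rfl
    rintro x ⟨l, hl, rfl⟩
    exact hholds t ht l (hprem hl)
  have hgoalX : .goal ∈ X := by
    refine hXn _ PiProgram.goal_mem (Set.empty_inter _) ?_ _ rfl
    rintro x ⟨l, hl, rfl⟩
    exact hholds n le_rfl l (hgoal hl)
  rintro (⟨l, t⟩ | ⟨a, t⟩ | ⟨a, t⟩ | _) hx
  · exact hholds t hx.1 l hx.2
  · exact hx.2 ▸ hocc t hx.1
  · exact hposs t hx.1 a hx.2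
  · exact hgoalX

theorem answerSet_trajectoryModel (h : IsTrajectory P.dom n ss acts) (hinit : ss 0 = P.init)
    (hgoal : P.goal ⊆ ss n) : AnswerSet (PiProgram P n) (trajectoryModel P n acts ss) :=
  ⟨satConstraints_trajectoryModel h, satChoices_trajectoryModel,
    reductClosed_trajectoryModel h hinit.superset,
    fun _ hX => trajectoryModel_subset_of_reductClosed h hinit.subset hgoal hX⟩

end Forward

section Backward

variable {F A : Type} {P : PlanningProblem F A} {n : ℕ} {acts : ℕ → A}
  {M : Set (PAtom F A)}

def stateAt (M : Set (PAtom F A)) (t : ℕ) : Set (Lit F) := {l | .holds l t ∈ M}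

/-- What an atom of an answer set certifies about the literal sets read off it; for
`holds(l,t+1)` it is the minimality half of the closure defining `Φ`. -/
def Supported (P : PlanningProblem F A) (n : ℕ) (acts : ℕ → A) (M : Set (PAtom F A)) :
    PAtom F A → Prop
  | .holds l (t + 1) => ∀ w, directEffects P.dom (acts t) (stateAt M t) ∪
      (stateAt M t ∩ stateAt M (t + 1)) ⊆ w → ClosedUnder P.dom.statics w → l ∈ w
  | .possible a t => Executable P.dom a (stateAt M t)
  | .goal => P.goal ⊆ stateAt M n
  | _ => True

namespace AnswerSet

variable (hM : AnswerSet (PiProgram P n) M)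
include hM

theorem init_subset_stateAt_zero : P.init ⊆ stateAt M 0 := fun _ hl =>
  hM.2.2.1.1 _ (PiProgram.fact_mem hl) (Set.empty_inter _) (Set.empty_subset _) _ rfl

theorem consistentLits_stateAt {t : ℕ} (ht : t ≤ n) : ConsistentLits (stateAt M t) := by
  refine fun f hf =>
    hM.1 _ (PiProgram.consistency_constraint_mem f ht) rfl ⟨?_, Set.empty_inter _⟩
  rintro x (rfl | rfl)
  exacts [hf.1, hf.2]

theorem closedUnder_stateAt {t : ℕ} (ht : t ≤ n) : ClosedUnder P.dom.statics (stateAt M t) := by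
  refine fun r hr hprem => hM.2.2.1.1 _ (PiProgram.static_mem hr ht) (Set.empty_inter _) ?_ _ rfl
  rintro x ⟨l, hl, rfl⟩
  exact hprem hl

theorem stateAt_zero (hinit : CompleteLits P.init) : stateAt M 0 = P.init := by
  refine Set.Subset.antisymm (fun l hl => ?_) hM.init_subset_stateAt_zero
  refine (completeLits_iff.1 hinit l).resolve_right fun hl' => ?_
  exact (hM.consistentLits_stateAt n.zero_le).compl_notMem hl (hM.init_subset_stateAt_zero hl')

theorem completeLits_stateAt (hinit : CompleteLits P.init) :
    ∀ t ≤ n, CompleteLits (stateAt M t) := by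
  intro t
  induction t with
  | zero => exact fun _ => hM.stateAt_zero hinit ▸ hinit
  | succ t ih =>
    intro (ht : t < n)
    have inertia :
        ∀ l ∈ stateAt M t, l ∈ stateAt M (t + 1) ∨ l.compl ∈ stateAt M (t + 1) := by
      intro l hl
      by_contra! hnot
      refine hnot.1 (hM.2.2.1.1 _ (PiProgram.inertia_mem l ht)
        (Set.singleton_inter_eq_empty.2 hnot.2) ?_ _ rfl)
      rintro x rfl
      exact hl
    refine completeLits_iff.2 fun l => ?_
    rcases completeLits_iff.1 (ih ht.le) l with hl | hl
    · exact inertia l hl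
    · simpa [or_comm] using inertia _ hl

theorem eq_of_occ_mem {t : ℕ} (ht : t < n) {a b : A} (ha : .occ a t ∈ M) (hb : .occ b t ∈ M) :
    a = b := by
  have hu := hM.2.1 _ (PiProgram.choice_mem ht) (Set.empty_subset _) (Set.empty_inter _)
  exact (PAtom.occ.inj (hu.unique ⟨⟨a, rfl⟩, ha⟩ ⟨⟨b, rfl⟩, hb⟩)).1

theorem possible_mem_of_occ_mem {t : ℕ} (ht : t < n) {a : A} (ha : .occ a t ∈ M) :
    .possible a t ∈ M := by
  by_contra hnot
  refine hM.1 _ (PiProgram.occ_constraint_mem a ht) rfl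
    ⟨?_, Set.singleton_inter_eq_empty.2 hnot⟩
  rintro x rfl
  exact ha

theorem goal_mem : .goal ∈ M := by
  by_contra hnot
  exact hM.1 _ PiProgram.goal_constraint_mem rfl
    ⟨Set.empty_subset _, Set.singleton_inter_eq_empty.2 hnot⟩

theorem supported (hocc : ∀ i < n, .occ (acts i) i ∈ M) :
    ∀ x ∈ M, Supported P n acts M x := by
  refine hM.induction (fun r hr hneg hpos x hx hxM => ?_) ?_
  · rcases hr with (((((((⟨l, hl, rfl⟩ | ⟨e, he, t, ht, rfl⟩) | ⟨d, hd, t, ht, rfl⟩) |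
      ⟨sl, hsl, t, ht, rfl⟩) | ⟨a, t, ht, rfl⟩) | ⟨l, t, ht, rfl⟩) |
      ⟨f, t, ht, rfl⟩) | (rfl | rfl)) <;> cases hx
    · trivial
    · exact ⟨e, he, rfl, fun l hl => (hpos ⟨l, hl, rfl⟩).1⟩
    · have hact := hM.eq_of_occ_mem ht (hpos (Set.mem_insert _ _)).1 (hocc t ht)
      have hprem : d.prem ⊆ stateAt M t := fun l hl =>
        (hpos (Set.mem_insert_of_mem _ ⟨l, hl, rfl⟩)).1
      exact fun w hw _ => hw (.inl ⟨d, hd, hact, rfl, hprem⟩)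
    · cases t with
      | zero => trivial
      | succ t => exact fun w hw hwc => hwc sl hsl fun l hl => (hpos ⟨l, hl, rfl⟩).2 w hw hwc
    · -- the head of an inertia rule is itself in `M`, so `l ∈ s_t ∩ s_{t+1}`
      exact fun w hw _ => hw (.inr ⟨(hpos rfl).1, hxM⟩)
    · exact fun l hl => (hpos ⟨l, hl, rfl⟩).1
  · rintro c ⟨t, -, rfl⟩ - - x ⟨a, rfl⟩ -
    trivial

theorem goal_subset_stateAt (hocc : ∀ i < n, .occ (acts i) i ∈ M) : P.goal ⊆ stateAt M n :=
  hM.supported hocc _ hM.goal_mem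

theorem isTrajectory_stateAt (hinit : CompleteLits P.init)
    (hocc : ∀ i < n, .occ (acts i) i ∈ M) : IsTrajectory P.dom n (stateAt M) acts := by
  have isState : ∀ t ≤ n, IsState P.dom (stateAt M t) := fun t ht =>
    ⟨hM.completeLits_stateAt hinit t ht, hM.consistentLits_stateAt ht,
      hM.closedUnder_stateAt ht⟩
  refine ⟨isState 0 n.zero_le, fun t ht => ?_⟩
  have hexec : Executable P.dom (acts t) (stateAt M t) :=
    hM.supported hocc _ (hM.possible_mem_of_occ_mem ht (hocc t ht))
  have hseed : directEffects P.dom (acts t) (stateAt M t) ∪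
      (stateAt M t ∩ stateAt M (t + 1)) ⊆ stateAt M (t + 1) := by
    rintro l (⟨d, hd, hact, rfl, hprem⟩ | ⟨-, hl⟩)
    · refine hM.2.2.1.1 _ (PiProgram.dynamic_mem hd ht) (Set.empty_inter _) ?_ _ rfl
      rintro x (rfl | ⟨l, hl, rfl⟩)
      · exact hact ▸ hocc t ht
      · exact hprem hl
    · exact hl
  have hstate := isState (t + 1) ht
  exact ⟨hexec, hstate, hseed, hstate.2.1, hstate.2.2,
    fun w hw _ hwc l hl => hM.supported hocc _ hl w hw hwc⟩

end AnswerSet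

end Backward

/-- **Answer set planning for deterministic theories**: `a_0,...,a_{n-1}` is a plan
achieving `Δ` iff there is an answer set `M` of `Π(P,n)` with `occ(a_i,i) ∈ M` for
all `i < n`. -/
theorem answer_set_planning_deterministic {F A : Type}
    (P : PlanningProblem F A) (n : ℕ) (hcons : ConsistentTheory P)
    (hdet : Deterministic P.dom)
    (acts : ℕ → A) :
    ((PhiHat P.dom (List.ofFn (fun i : Fin n => acts i)) P.init).Nonempty ∧
      ∀ s ∈ PhiHat P.dom (List.ofFn (fun i : Fin n => acts i)) P.init,
        P.goal ⊆ s) ↔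
    (∃ M : Set (PAtom F A), AnswerSet (PiProgram P n) M ∧
        ∀ i < n, PAtom.occ (acts i) i ∈ M) := by
  constructor
  · rintro ⟨⟨s, hs⟩, hgoal⟩
    obtain ⟨ss, htraj, h0, hn⟩ := exists_isTrajectory_of_mem_phiHat hcons.2 hs
    exact ⟨trajectoryModel P n acts ss, answerSet_trajectoryModel htraj h0 (hn ▸ hgoal s hs),
      fun i hi => ⟨hi, rfl⟩⟩
  · rintro ⟨M, hM, hocc⟩
    have hΦ := phiHat_eq_singleton hdet (hM.isTrajectory_stateAt hcons.2.1 hocc)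
    rw [hM.stateAt_zero hcons.2.1] at hΦ
    rw [hΦ]
    exact ⟨Set.singleton_nonempty _, fun s hs => hs ▸ hM.goal_subset_stateAt hocc⟩
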